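/- Let c_1 > 0, let c be a real number, let m > 0 and let p > 1 be real. Then the integral of x^{m−2} · (|cx + y|/x)^{p−1} · e^{−c_1 x^2} over the region {(x,y) ∈ R^2 : x > 0 and x ≥ |cx + y|} equals (2/p) · ∫_0^∞ x^{m−1} e^{−c_1 x^2} dx. -/
import Mathlib

open MeasureTheory Real intervalIntegral

lemma abs_rpow_intervalIntegral {p : ℝ} (hp : 1 < p) {x : ℝ} (hx : 0 < x) :
    ∫ y in (-x)..x, |y| ^ (p - 1) = 2 * x ^ p / p := by
  have hcont : Continuous fun y : ℝ => |y| ^ (p - 1) :=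
    continuous_abs.rpow_const (fun y => Or.inr (by linarith))
  have h2 : ∫ y in (0:ℝ)..x, |y| ^ (p - 1) = x ^ p / p := by
    rw [intervalIntegral.integral_congr (g := fun y : ℝ => y ^ (p - 1))
      (fun y hy => by
        rw [Set.uIcc_of_le hx.le] at hy
        rw [abs_of_nonneg hy.1])]
    rw [integral_rpow (Or.inl (by linarith))]
    have hpe : p - 1 + 1 = p := by ring
    rw [hpe, Real.zero_rpow (by linarith : p ≠ 0), sub_zero]
  have h1 : ∫ y in (-x)..(0:ℝ), |y| ^ (p - 1) = x ^ p / p := by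
    have := intervalIntegral.integral_comp_neg (a := (0:ℝ)) (b := x)
      (fun y : ℝ => |y| ^ (p - 1))
    simp only [abs_neg, neg_zero] at this
    rw [← this, h2]
  have hadd := intervalIntegral.integral_add_adjacent_intervals
    (a := -x) (b := (0:ℝ)) (c := x)
    (hcont.intervalIntegrable (μ := volume) (-x) 0) (hcont.intervalIntegrable (μ := volume) 0 x)
  rw [← hadd, h1, h2]; ring

lemma inner_integral {p : ℝ} (hp : 1 < p) (c : ℝ) {x : ℝ} (hx : 0 < x) :
    ∫ y in Set.Icc (-x - c * x) (x - c * x), (|c * x + y| / x) ^ (p - 1)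
      = 2 * x / p := by
  rw [MeasureTheory.integral_Icc_eq_integral_Ioc,
    ← intervalIntegral.integral_of_le (by linarith : -x - c * x ≤ x - c * x)]
  have hshift := intervalIntegral.integral_comp_add_left
    (a := -x - c * x) (b := x - c * x)
    (fun u : ℝ => (|u| / x) ^ (p - 1)) (c * x)
  have e1 : c * x + (-x - c * x) = -x := by ring
  have e2 : c * x + (x - c * x) = x := by ring
  rw [e1, e2] at hshift
  rw [hshift]
  have hxp : (0:ℝ) < x ^ (p - 1) := Real.rpow_pos_of_pos hx _
  have : ∀ u : ℝ, (|u| / x) ^ (p - 1) = |u| ^ (p - 1) / x ^ (p - 1) :=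
    fun u => Real.div_rpow (abs_nonneg u) hx.le (p - 1)
  simp_rw [this, intervalIntegral.integral_div, abs_rpow_intervalIntegral hp hx]
  have hxe : x ^ p = x ^ (p - 1) * x := by
    rw [← Real.rpow_add_one hx.ne' (p - 1)]; ring_nf
  rw [hxe]
  field_simp

set_option maxHeartbeats 1000000 in
/-- **Integral over the region `x ≥ |cx + y|`, `x > 0`.** For `c₁ > 0`, `c ∈ ℝ`, `m > 0`
and real `p > 1`,
`∫_{x > 0, x ≥ |cx+y|} x^(m-2) (|cx+y|/x)^(p-1) e^(-c₁ x²) dx dy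
  = (2/p) ∫_0^∞ x^(m-1) e^(-c₁ x²) dx`. -/
theorem integral_region_Sx (c₁ : ℝ) (hc₁ : 0 < c₁) (c : ℝ)
    (m : ℝ) (hm : 0 < m) (p : ℝ) (hp : 1 < p) :
    (∫ q in {q : ℝ × ℝ | 0 < q.1 ∧ |c * q.1 + q.2| ≤ q.1},
        q.1 ^ (m - 2) * (|c * q.1 + q.2| / q.1) ^ (p - 1)
          * Real.exp (-c₁ * q.1 ^ 2))
      = (2 / p) * ∫ x in Set.Ioi (0 : ℝ), x ^ (m - 1) * Real.exp (-c₁ * x ^ 2) := by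
  set f : ℝ × ℝ → ℝ := fun q =>
    q.1 ^ (m - 2) * (|c * q.1 + q.2| / q.1) ^ (p - 1) * Real.exp (-c₁ * q.1 ^ 2)
    with hfdef
  set S : Set (ℝ × ℝ) := {q : ℝ × ℝ | 0 < q.1 ∧ |c * q.1 + q.2| ≤ q.1} with hSdef
  have hS : MeasurableSet S := by
    apply MeasurableSet.inter
    · exact measurableSet_lt measurable_const measurable_fst
    · exact measurableSet_le
        ((measurable_const.mul measurable_fst).add measurable_snd).abs measurable_fst
  have hfm : Measurable f := by
    rw [hfdef]; measurability
  set F : ℝ × ℝ → ℝ := S.indicator f with hFdef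
  have hFm : Measurable F := hfm.indicator hS
  -- pointwise description of slices
  have hslice : ∀ x : ℝ, 0 < x → (fun y => F (x, y)) =
      (Set.Icc (-x - c * x) (x - c * x)).indicator (fun y => f (x, y)) := by
    intro x hx
    funext y
    by_cases hy : y ∈ Set.Icc (-x - c * x) (x - c * x)
    · rw [Set.indicator_of_mem hy]
      apply Set.indicator_of_mem
      refine ⟨hx, ?_⟩
      rw [abs_le]
      constructor <;> [linarith [hy.1]; linarith [hy.2]]
    · rw [Set.indicator_of_notMem hy]
      apply Set.indicator_of_notMem
      intro hmem
      apply hy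
      have h2 := hmem.2
      rw [abs_le] at h2
      exact ⟨by linarith [h2.1], by linarith [h2.2]⟩
  have hslice0 : ∀ x : ℝ, x ≤ 0 → (fun y => F (x, y)) = 0 := by
    intro x hx
    funext y
    apply Set.indicator_of_notMem
    intro hmem
    exact absurd hmem.1 (not_lt.2 hx)
  have hFnonneg : ∀ q, 0 ≤ F q := by
    intro q
    apply Set.indicator_nonneg
    intro q hq
    have hq1 : 0 < q.1 := hq.1
    exact mul_nonneg (mul_nonneg (Real.rpow_nonneg hq1.le _)
      (Real.rpow_nonneg (div_nonneg (abs_nonneg _) hq1.le) _)) (Real.exp_nonneg _)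
  -- the marginal integral
  have hmar : ∀ x : ℝ, (∫ y, F (x, y)) =
      (Set.Ioi (0:ℝ)).indicator
        (fun x => (2 / p) * (x ^ (m - 1) * Real.exp (-c₁ * x ^ 2))) x := by
    intro x
    rcases le_or_gt x 0 with hx | hx
    · rw [hslice0 x hx, Set.indicator_of_notMem (by simpa using hx)]
      simp
    · rw [hslice x hx, MeasureTheory.integral_indicator measurableSet_Icc,
        Set.indicator_of_mem (Set.mem_Ioi.2 hx)]
      have : ∀ y : ℝ, f (x, y) = (x ^ (m - 2) * Real.exp (-c₁ * x ^ 2)) *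
          (|c * x + y| / x) ^ (p - 1) := by
        intro y; simp only [hfdef]; ring
      simp_rw [this, MeasureTheory.integral_const_mul, inner_integral hp c hx]
      have hxe : x ^ (m - 2) * x = x ^ (m - 1) := by
        rw [← Real.rpow_add_one hx.ne' (m - 2)]; ring_nf
      field_simp
      rw [← hxe]
  -- integrability
  have hFae : AEStronglyMeasurable F ((volume : Measure ℝ).prod volume) :=
    hFm.aestronglyMeasurable
  have hint : Integrable F ((volume : Measure ℝ).prod volume) := by
    refine (MeasureTheory.integrable_prod_iff hFae).2 ⟨?_, ?_⟩
    · filter_upwards with x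
      rcases le_or_gt x 0 with hx | hx
      · rw [hslice0 x hx]; exact integrable_zero _ _ _
      · rw [hslice x hx]
        rw [MeasureTheory.integrable_indicator_iff measurableSet_Icc]
        have hcont : Continuous fun y => f (x, y) := by
          simp only [hfdef]
          exact (continuous_const.mul
            (((continuous_const.add continuous_id).abs.div_const x).rpow_const
              (fun y => Or.inr (by linarith : (0:ℝ) ≤ p - 1)))).mul continuous_const
        exact hcont.integrableOn_Icc
    · have : (fun x => ∫ y, ‖F (x, y)‖) = fun x => ∫ y, F (x, y) := by
        funext x
        congr 1
        funext y
        exact Real.norm_of_nonneg (hFnonneg _)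
      rw [this]
      have : (fun x => ∫ y, F (x, y)) = (Set.Ioi (0:ℝ)).indicator
          (fun x => (2 / p) * (x ^ (m - 1) * Real.exp (-c₁ * x ^ 2))) := by
        funext x; exact hmar x
      rw [this]
      exact ((integrable_rpow_mul_exp_neg_mul_sq hc₁ (by linarith : (-1:ℝ) < m - 1)).const_mul
        (2 / p)).indicator measurableSet_Ioi
  -- Fubini
  calc (∫ q in S, f q) = ∫ q, F q := (MeasureTheory.integral_indicator hS).symm
    _ = ∫ x, ∫ y, F (x, y) := MeasureTheory.integral_prod F hint
    _ = ∫ x, (Set.Ioi (0:ℝ)).indicator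
          (fun x => (2 / p) * (x ^ (m - 1) * Real.exp (-c₁ * x ^ 2))) x := by
        simp_rw [hmar]
    _ = ∫ x in Set.Ioi (0:ℝ), (2 / p) * (x ^ (m - 1) * Real.exp (-c₁ * x ^ 2)) :=
        MeasureTheory.integral_indicator measurableSet_Ioi
    _ = (2 / p) * ∫ x in Set.Ioi (0:ℝ), x ^ (m - 1) * Real.exp (-c₁ * x ^ 2) :=
        MeasureTheory.integral_const_mul _ _
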